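/- If an element a is ranked first by a strict majority of the input rankings, then a is ranked first in every locally Kemeny optimal aggregation. -/
import Mathlib


open Finset

/-- A ranking of `n` candidates is a permutation `Fin n ≃ Fin n` sending each
candidate to its position; `σ a < σ b` means `σ` ranks `a` before `b`. -/
def kendall (n : ℕ) (σ π : Equiv.Perm (Fin n)) : ℕ :=
  (Finset.univ.filter (fun p : Fin n × Fin n =>
    p.1 < p.2 ∧ ¬ ((σ p.1 < σ p.2) ↔ (π p.1 < π p.2)))).card

lemma swap_lt {n : ℕ} (u v m m' : Fin n) (hv : (v:ℕ) = u + 1)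
    (h1 : ¬(m = u ∧ m' = v)) (h2 : ¬(m = v ∧ m' = u)) :
    (Equiv.swap u v m < Equiv.swap u v m' ↔ m < m') := by
  rcases eq_or_ne m m' with rfl | hne
  · simp
  simp only [Equiv.swap_apply_def]
  simp only [Fin.ext_iff, not_and, Fin.lt_def, ne_eq] at *
  split_ifs <;> omega

lemma kendall_swap (n : ℕ) (τ π : Equiv.Perm (Fin n)) (c d : Fin n)
    (h : (τ d : ℕ) = (τ c : ℕ) + 1) :
    kendall n (τ.trans (Equiv.swap (τ c) (τ d))) π + (if π d < π c then 1 else 0)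
      = kendall n τ π + (if π c < π d then 1 else 0) := by
  set τ' := τ.trans (Equiv.swap (τ c) (τ d)) with hτ'def
  have hcd : c ≠ d := by
    intro he; rw [he] at h; omega
  have hπ : π c ≠ π d := fun he => hcd (π.injective he)
  have hτlt : τ c < τ d := by rw [Fin.lt_def]; omega
  have hτ'c : τ' c = τ d := by
    simp [hτ'def, Equiv.swap_apply_left]
  have hτ'd : τ' d = τ c := by
    simp [hτ'def, Equiv.swap_apply_right]
  set p0 : Fin n × Fin n := if c < d then (c, d) else (d, c) with hp0
  have hp0mem : p0 ∈ (univ : Finset (Fin n × Fin n)) := mem_univ _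
  rw [kendall, kendall, Finset.card_filter, Finset.card_filter,
    ← Finset.sum_erase_add _ _ hp0mem, ← Finset.sum_erase_add _ _ hp0mem]
  have hsum : (∑ p ∈ univ.erase p0, if p.1 < p.2 ∧ ¬(τ' p.1 < τ' p.2 ↔ π p.1 < π p.2) then 1 else 0)
      = ∑ p ∈ univ.erase p0, if p.1 < p.2 ∧ ¬(τ p.1 < τ p.2 ↔ π p.1 < π p.2) then 1 else 0 := by
    refine Finset.sum_congr rfl fun p hp => ?_
    have hne : p ≠ p0 := (Finset.mem_erase.mp hp).1
    congr 1
    by_cases hlt : p.1 < p.2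
    · have key : τ' p.1 < τ' p.2 ↔ τ p.1 < τ p.2 := by
        have e1 : τ' p.1 = Equiv.swap (τ c) (τ d) (τ p.1) := rfl
        have e2 : τ' p.2 = Equiv.swap (τ c) (τ d) (τ p.2) := rfl
        rw [e1, e2]
        refine swap_lt _ _ _ _ h ?_ ?_
        · rintro ⟨h1, h2⟩
          have hc : p.1 = c := τ.injective h1
          have hd : p.2 = d := τ.injective h2
          apply hne
          rw [hp0, if_pos (hc ▸ hd ▸ hlt)]
          exact Prod.ext hc hd
        · rintro ⟨h1, h2⟩
          have hc : p.1 = d := τ.injective h1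
          have hd : p.2 = c := τ.injective h2
          apply hne
          rw [hp0, if_neg (by rw [hc, hd] at hlt; exact asymm hlt)]
          exact Prod.ext hc hd
      simp [hlt, key]
    · simp [hlt]
  rw [hsum]
  have hA : (if p0.1 < p0.2 ∧ ¬(τ' p0.1 < τ' p0.2 ↔ π p0.1 < π p0.2) then 1 else 0)
      = if π c < π d then (1:ℕ) else 0 := by
    have hτ'lt : ¬ (τ' c < τ' d) := by rw [hτ'c, hτ'd]; exact asymm hτlt
    rcases lt_or_gt_of_ne hcd with hlt | hlt
    · rw [hp0, if_pos hlt]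
      by_cases hp : π c < π d
      · rw [if_pos ⟨hlt, by simp [hτ'lt, hp]⟩, if_pos hp]
      · rw [if_neg (by simp [hτ'lt, hp]), if_neg hp]
    · rw [hp0, if_neg (asymm hlt)]
      have hτ'lt2 : τ' d < τ' c := by
        rw [hτ'c, hτ'd]; exact hτlt
      by_cases hp : π c < π d
      · rw [if_pos ⟨hlt, by simp [hτ'lt2, asymm hp]⟩, if_pos hp]
      · rw [if_neg (by simp [hτ'lt2, hπ.lt_or_gt.resolve_left hp]), if_neg hp]
  have hB : (if p0.1 < p0.2 ∧ ¬(τ p0.1 < τ p0.2 ↔ π p0.1 < π p0.2) then 1 else 0)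
      = if π d < π c then (1:ℕ) else 0 := by
    rcases lt_or_gt_of_ne hcd with hlt | hlt
    · rw [hp0, if_pos hlt]
      by_cases hp : π d < π c
      · rw [if_pos ⟨hlt, by simp [hτlt, asymm hp]⟩, if_pos hp]
      · rw [if_neg (by simp [hτlt, hπ.lt_or_gt.resolve_right hp]), if_neg hp]
    · rw [hp0, if_neg (asymm hlt)]
      have hτlt2 : ¬ (τ d < τ c) := asymm hτlt
      by_cases hp : π d < π c
      · rw [if_pos ⟨hlt, by simp [hτlt2, hp]⟩, if_pos hp]
      · rw [if_neg (by simp [hτlt2, hp]), if_neg hp]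
  rw [hA, hB]
  omega

/-- Total Kendall tau distance of `τ` to the profile `τs`. -/
def totalDist (r n : ℕ) (τs : Fin r → Equiv.Perm (Fin n)) (τ : Equiv.Perm (Fin n)) : ℕ :=
  ∑ i : Fin r, kendall n τ (τs i)

/-- If a strict majority ranks a first, then a is first in every locally Kemeny
optimal aggregation. -/
theorem majority_first_is_first (n r : ℕ)
    (τs : Fin r → Equiv.Perm (Fin n)) (a : Fin n)
    (hmaj : r < 2 * (Finset.univ.filter (fun i => (τs i a : ℕ) = 0)).card)
    (τ : Equiv.Perm (Fin n))
    (hlko : ∀ c d : Fin n, (τ d : ℕ) = (τ c : ℕ) + 1 →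
      ¬ (totalDist r n τs (τ.trans (Equiv.swap (τ c) (τ d))) < totalDist r n τs τ)) :
    (τ a : ℕ) = 0 := by
  by_contra h0
  have hn : (τ a : ℕ) < n := (τ a).isLt
  have hk : 0 < (τ a : ℕ) := Nat.pos_of_ne_zero h0
  set c : Fin n := τ.symm ⟨(τ a : ℕ) - 1, by omega⟩ with hc
  have hτc : (τ c : ℕ) = (τ a : ℕ) - 1 := by
    rw [hc, Equiv.apply_symm_apply]
  have hstep : (τ a : ℕ) = (τ c : ℕ) + 1 := by omega
  have hca : c ≠ a := by
    intro he; rw [he] at hτc; omega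
  refine hlko c a hstep ?_
  have key : ∀ i : Fin r,
      kendall n (τ.trans (Equiv.swap (τ c) (τ a))) (τs i)
        + (if τs i a < τs i c then 1 else 0)
      = kendall n τ (τs i) + (if τs i c < τs i a then 1 else 0) :=
    fun i => kendall_swap n τ (τs i) c a hstep
  have hsum : totalDist r n τs (τ.trans (Equiv.swap (τ c) (τ a)))
        + ∑ i : Fin r, (if τs i a < τs i c then 1 else 0)
      = totalDist r n τs τ + ∑ i : Fin r, (if τs i c < τs i a then 1 else 0) := by
    rw [totalDist, totalDist, ← Finset.sum_add_distrib, ← Finset.sum_add_distrib]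
    exact Finset.sum_congr rfl fun i _ => key i
  have hone : ∀ i : Fin r, (if τs i a < τs i c then (1:ℕ) else 0)
      + (if τs i c < τs i a then 1 else 0) = 1 := by
    intro i
    have hne : τs i a ≠ τs i c := fun he => hca.symm ((τs i).injective he)
    rcases hne.lt_or_gt with h' | h'
    · rw [if_pos h', if_neg (asymm h')]
    · rw [if_neg (asymm h'), if_pos h']
  have htot : (∑ i : Fin r, (if τs i a < τs i c then (1:ℕ) else 0))
      + ∑ i : Fin r, (if τs i c < τs i a then 1 else 0) = r := by
    rw [← Finset.sum_add_distrib]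
    simp [hone]
  have hBcard : (Finset.univ.filter (fun i => (τs i a : ℕ) = 0)).card
      ≤ ∑ i : Fin r, (if τs i a < τs i c then (1:ℕ) else 0) := by
    rw [← Finset.card_filter]
    apply Finset.card_le_card
    intro i hi
    simp only [Finset.mem_filter, Finset.mem_univ, true_and] at hi ⊢
    have hne : τs i c ≠ τs i a := fun he => hca ((τs i).injective he)
    rw [Fin.lt_def]
    have : (τs i c : ℕ) ≠ 0 := by
      intro h'
      exact hne (Fin.ext (by omega))
    omega
  omega
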